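/- For the DE transformation on (0,1), φ(u) = (1/2)(1 + tanh((π/2) sinh u)), and for 0 < α < 1, the function u ↦ φ(u)^{-α} · φ'(u) is bounded on (-∞, 0] and decays to 0 as u → -∞. -/

import Mathlib

open Real Filter

/-! Put `x = (π/2) sinh u`, which is `≤ 0` for `u ≤ 0`. Then `φ(u) = 1 / (1 + e^{-2x})`, so
`φ(u)^{-α} ≤ 2^α e^{-2αx}`, while `sech² x ≤ 4 e^{2x}` and `cosh u ≤ e^{-u}`. Hence
`φ(u)^{-α} φ'(u) ≤ 2^α π exp((1 - α) π sinh u - u)`, and since `α < 1` the double-exponential decay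
of `exp((1 - α) π sinh u)` beats the growth of `e^{-u}`. Boundedness on `(-∞, 0]` then follows from
continuity and the limit at `-∞`. -/

open Set Topology

lemma exists_forall_norm_le_of_continuousOn_Iic_of_tendsto_atBot {E : Type*}
    [SeminormedAddCommGroup E] {f : ℝ → E} {b : ℝ} {l : E} (hf : ContinuousOn f (Iic b))
    (hlim : Tendsto f atBot (𝓝 l)) : ∃ M, ∀ u ≤ b, ‖f u‖ ≤ M := by
  obtain ⟨a, ha⟩ := eventually_atBot.1 (hlim.norm.eventually (eventually_le_nhds (lt_add_one ‖l‖)))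
  obtain ⟨C, hC⟩ :=
    isCompact_Icc.exists_bound_of_continuousOn (hf.mono (Icc_subset_Iic_self (a := a)))
  refine ⟨max (‖l‖ + 1) C, fun u hu => ?_⟩
  rcases le_total u a with h | h
  · exact (ha u h).trans (le_max_left _ _)
  · exact (hC u ⟨h, hu⟩).trans (le_max_right _ _)

namespace Real

lemma exp_abs_le_two_mul_cosh (x : ℝ) : exp |x| ≤ 2 * cosh x := by
  rw [← cosh_abs, cosh_eq]
  linarith [exp_pos (-|x|)]

lemma cosh_le_exp_abs (x : ℝ) : cosh x ≤ exp |x| := by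
  rw [← cosh_abs, cosh_eq]
  linarith [exp_le_exp.2 (show -|x| ≤ |x| by linarith [abs_nonneg x])]

lemma one_div_cosh_sq_le (x : ℝ) : (1 / cosh x) ^ 2 ≤ 4 * exp (-(2 * |x|)) := by
  have h : 1 / cosh x ≤ 2 * exp (-|x|) := by
    have hinv : exp (-|x|) * exp |x| = 1 := by rw [← exp_add]; simp
    rw [div_le_iff₀ (cosh_pos x)]
    nlinarith [mul_le_mul_of_nonneg_left (exp_abs_le_two_mul_cosh x) (exp_pos (-|x|)).le]
  calc (1 / cosh x) ^ 2 ≤ (2 * exp (-|x|)) ^ 2 := pow_le_pow_left₀ (by positivity) h 2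
    _ = 4 * exp (-(2 * |x|)) := by rw [mul_pow, ← exp_nat_mul]; ring_nf

lemma half_mul_one_add_tanh (x : ℝ) : 1 / 2 * (1 + tanh x) = (1 + exp (-(2 * x)))⁻¹ := by
  have h : exp (-(2 * x)) = exp (-x) / exp x := by rw [← exp_sub]; ring_nf
  rw [tanh_eq_sinh_div_cosh, sinh_eq, cosh_eq, h]
  field_simp
  ring

lemma half_mul_one_add_tanh_rpow_neg_le {x α : ℝ} (hx : x ≤ 0) (hα : 0 ≤ α) :
    (1 / 2 * (1 + tanh x)) ^ (-α) ≤ 2 ^ α * exp (-(2 * α * x)) := by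
  rw [half_mul_one_add_tanh, rpow_neg (by positivity), inv_rpow (by positivity), inv_inv]
  calc (1 + exp (-(2 * x))) ^ α ≤ (2 * exp (-(2 * x))) ^ α :=
        rpow_le_rpow (by positivity) (by linarith [one_le_exp (by linarith : 0 ≤ -(2 * x))]) hα
    _ = 2 ^ α * exp (-(2 * α * x)) := by
        rw [mul_rpow (by norm_num) (exp_pos _).le, ← exp_mul]; ring_nf

lemma tendsto_exp_mul_sinh_sub_atBot {c : ℝ} (hc : 0 < c) :
    Tendsto (fun u => exp (c * sinh u - u)) atBot (𝓝 0) := by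
  have hsplit : ∀ u, exp (c * sinh u - u) =
      exp (c / 2 * exp u) * (exp (-u) ^ (1 : ℝ) * exp (-(c / 2) * exp (-u))) := by
    intro u
    rw [rpow_one, sinh_eq, ← exp_add, ← exp_add]
    ring_nf
  have hfirst : Tendsto (fun u => exp (c / 2 * exp u)) atBot (𝓝 1) := by
    have h : Tendsto (fun u => c / 2 * exp u) atBot (𝓝 0) := by
      simpa using tendsto_exp_atBot.const_mul (c / 2)
    exact tendsto_exp_nhds_zero_nhds_one.comp h
  have hsecond := (tendsto_rpow_mul_exp_neg_mul_atTop_nhds_zero 1 (c / 2) (by positivity)).comp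
    (tendsto_exp_atTop.comp tendsto_neg_atBot_atTop)
  simpa [hsplit] using hfirst.mul hsecond

end Real

noncomputable def deTransform (u : ℝ) : ℝ := 1 / 2 * (1 + tanh (π / 2 * sinh u))

noncomputable def deTransformDeriv (u : ℝ) : ℝ := π / 4 * (1 / cosh (π / 2 * sinh u)) ^ 2 * cosh u

lemma deTransform_pos (u : ℝ) : 0 < deTransform u := by
  rw [deTransform, half_mul_one_add_tanh]
  positivity

lemma deTransformDeriv_nonneg (u : ℝ) : 0 ≤ deTransformDeriv u := by
  rw [deTransformDeriv]
  positivity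

lemma continuous_deTransform : Continuous deTransform := by
  have h : deTransform = fun u => (1 + exp (-(2 * (π / 2 * sinh u))))⁻¹ :=
    funext fun _ => half_mul_one_add_tanh _
  rw [h]
  exact (by fun_prop : Continuous _).inv₀ fun _ => by positivity

lemma continuous_deTransformDeriv : Continuous deTransformDeriv := by
  have : Continuous fun u => 1 / cosh (π / 2 * sinh u) :=
    continuous_const.div (by fun_prop) fun _ => (cosh_pos _).ne'
  unfold deTransformDeriv
  fun_prop

lemma deTransform_rpow_neg_mul_deriv_le {α u : ℝ} (hα : 0 ≤ α) (hu : u ≤ 0) :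
    deTransform u ^ (-α) * deTransformDeriv u ≤ 2 ^ α * π * exp ((1 - α) * π * sinh u - u) := by
  set x := π / 2 * sinh u with hx_def
  have hx : x ≤ 0 := mul_nonpos_of_nonneg_of_nonpos (by positivity) (sinh_nonpos_iff.2 hu)
  have hsech := one_div_cosh_sq_le x
  have hcosh := cosh_le_exp_abs u
  rw [abs_of_nonpos hx] at hsech
  rw [abs_of_nonpos hu] at hcosh
  have hderiv : deTransformDeriv u ≤ π * exp (2 * x) * exp (-u) := by
    calc deTransformDeriv u ≤ π / 4 * (4 * exp (-(2 * -x))) * exp (-u) := by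
          rw [deTransformDeriv]; gcongr
      _ = π * exp (2 * x) * exp (-u) := by ring_nf
  calc deTransform u ^ (-α) * deTransformDeriv u
      ≤ 2 ^ α * exp (-(2 * α * x)) * (π * exp (2 * x) * exp (-u)) :=
        mul_le_mul (half_mul_one_add_tanh_rpow_neg_le hx hα) hderiv (deTransformDeriv_nonneg u)
          (by positivity)
    _ = 2 ^ α * π * exp ((1 - α) * π * sinh u - u) := by
        have hexp : exp ((1 - α) * π * sinh u - u) =
            exp (-(2 * α * x)) * exp (2 * x) * exp (-u) := by
          rw [← exp_add, ← exp_add, hx_def]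
          ring_nf
        rw [hexp]
        ring

theorem de_annuls_endpoint_singularity (α : ℝ) (hα0 : 0 < α) (hα1 : α < 1)
    (φ : ℝ → ℝ)
    (hφ : ∀ u, φ u = (1/2) * (1 + Real.tanh (π/2 * Real.sinh u)))
    (φ' : ℝ → ℝ)
    (hφ' : ∀ u, φ' u = (π/4) * (1 / Real.cosh (π/2 * Real.sinh u)) ^ 2 * Real.cosh u) :
    (∃ M : ℝ, ∀ u ≤ (0:ℝ), |φ u ^ (-α) * φ' u| ≤ M) ∧
    Tendsto (fun u => φ u ^ (-α) * φ' u) atBot (nhds 0) := by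
  obtain rfl : φ = deTransform := funext hφ
  obtain rfl : φ' = deTransformDeriv := funext hφ'
  have hc : 0 < (1 - α) * π := mul_pos (sub_pos.2 hα1) pi_pos
  have hlim : Tendsto (fun u => deTransform u ^ (-α) * deTransformDeriv u) atBot (𝓝 0) := by
    refine tendsto_of_tendsto_of_tendsto_of_le_of_le' tendsto_const_nhds
      (by simpa using (tendsto_exp_mul_sinh_sub_atBot hc).const_mul (2 ^ α * π))
      (.of_forall fun u => mul_nonneg (rpow_nonneg (deTransform_pos u).le _)
        (deTransformDeriv_nonneg u)) ?_
    filter_upwards [eventually_le_atBot 0] with u hu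
    exact deTransform_rpow_neg_mul_deriv_le hα0.le hu
  have hcont : Continuous fun u => deTransform u ^ (-α) * deTransformDeriv u :=
    (continuous_deTransform.rpow_const fun u => .inl (deTransform_pos u).ne').mul
      continuous_deTransformDeriv
  refine ⟨?_, hlim⟩
  simpa only [Real.norm_eq_abs] using
    exists_forall_norm_le_of_continuousOn_Iic_of_tendsto_atBot (b := 0) hcont.continuousOn hlim
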